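/- arXiv:2206.08375 — 5 statements merged into one kernel-verified Lean document; each statement's English description precedes it below -/
import Mathlib

section
/- Let 0 < q, q ≠ 1, and set α = (q^{1/2} + q^{-1/2})/2. With D and S as in the product-rule setup, and U₂(z) = (α² − 1)·(((z + z^{-1})/2)² − 1), one has for all real functions F, G on ℝ_{>0} and all z > 0 with z ≠ 1: S(F·G)(z) = U₂(z)·(D F)(z)·(D G)(z) + (S F)(z)·(S G)(z). -/
/-- Askey–Wilson product rule for the averaging operator `S`:
`S(F·G) = U₂·(D F)(D G) + (S F)(S G)`, where
`U₂(z) = (α² − 1)(((z + z⁻¹)/2)² − 1)` and `α = (q^{1/2} + q^{-1/2})/2`. -/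
theorem askey_wilson_product_rule_S
    (q : ℝ) (hq : 0 < q) (hq1 : q ≠ 1)
    (α : ℝ) (hα : α = (q ^ ((1 : ℝ)/2) + q ^ (-(1 : ℝ)/2)) / 2)
    (D S : (ℝ → ℝ) → ℝ → ℝ)
    (hD : ∀ F : ℝ → ℝ, ∀ z : ℝ,
      D F z = (F (q ^ ((1 : ℝ)/2) * z) - F (q ^ (-(1 : ℝ)/2) * z)) /
        (((q ^ ((1 : ℝ)/2) - q ^ (-(1 : ℝ)/2)) / 2) * (z - z⁻¹)))
    (hS : ∀ F : ℝ → ℝ, ∀ z : ℝ,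
      S F z = (F (q ^ ((1 : ℝ)/2) * z) + F (q ^ (-(1 : ℝ)/2) * z)) / 2)
    (U₂ : ℝ → ℝ) (hU : ∀ z : ℝ, U₂ z = (α ^ 2 - 1) * (((z + z⁻¹) / 2) ^ 2 - 1))
    (F G : ℝ → ℝ) (z : ℝ) (hz : 0 < z) (hz1 : z ≠ 1) :
    S (fun t => F t * G t) z = U₂ z * D F z * D G z + S F z * S G z := by
  set s : ℝ := q ^ ((1 : ℝ)/2) with hs_def
  have hs_pos : 0 < s := Real.rpow_pos_of_pos hq _
  have hneg : q ^ (-(1 : ℝ)/2) = s⁻¹ := by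
    rw [hs_def, ← Real.rpow_neg hq.le]
    norm_num
  have hs1 : s ≠ 1 := by
    intro h
    apply hq1
    have hss : s * s = q := by
      rw [hs_def, ← Real.rpow_add hq]; norm_num
    rw [h] at hss
    simpa using hss.symm
  have hsne : s - s⁻¹ ≠ 0 := by
    intro h
    have : s * (s - s⁻¹) = 0 := by rw [h]; ring
    have h2 : s ^ 2 - 1 = 0 := by
      field_simp at this
      nlinarith [this]
    have : (s - 1) * (s + 1) = 0 := by nlinarith
    rcases mul_eq_zero.mp this with h | h
    · exact hs1 (by linarith)
    · nlinarith
  have hzne : z - z⁻¹ ≠ 0 := by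
    intro h
    have : z * (z - z⁻¹) = 0 := by rw [h]; ring
    have h2 : z ^ 2 - 1 = 0 := by
      field_simp at this
      nlinarith [this]
    have : (z - 1) * (z + 1) = 0 := by nlinarith
    rcases mul_eq_zero.mp this with h | h
    · exact hz1 (by linarith)
    · nlinarith
  have hKey : U₂ z = ((s - s⁻¹) / 2 * (z - z⁻¹)) ^ 2 / 4 := by
    rw [hU, hα, hneg]
    have h1 : s⁻¹ * s = 1 := inv_mul_cancel₀ hs_pos.ne'
    have h2 : z⁻¹ * z = 1 := inv_mul_cancel₀ hz.ne'
    nlinarith [h1, h2, sq_nonneg s, sq_nonneg z]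
  have hKne : (s - s⁻¹) / 2 * (z - z⁻¹) ≠ 0 :=
    mul_ne_zero (div_ne_zero hsne two_ne_zero) hzne
  rw [hS, hS, hS, hD, hD, hKey, hneg]
  set K : ℝ := (s - s⁻¹) / 2 * (z - z⁻¹) with hK
  set a : ℝ := F (s * z)
  set b : ℝ := F (s⁻¹ * z)
  set c : ℝ := G (s * z)
  set d : ℝ := G (s⁻¹ * z)
  show (a * c + b * d) / 2 = K ^ 2 / 4 * ((a - b) / K) * ((c - d) / K) + (a + b) / 2 * ((c + d) / 2)
  field_simp
  ring
end

section
/- Let 0 < q < 1 and define α = (q^{1/2} + q^{-1/2})/2, C_n = (1/4)(1 + q^{(n−1)/2})(1 − q^{n/2})(1 − q^{n−1/2}), and c_n = C_n · q^{-(2n−1)/4} (with C₀ = c₀ = 0 and C_{-1} = c_{-1} = 0 by convention). Then for every integer k ≥ 2: (α² − 1)·c_k·C_{k−1}·C_{k−2} + α·(c_{k−1}·C_k − α·c_k·C_{k−1})·C_{k−2} − (c_{k−2}·C_{k−1} − α·c_{k−1}·C_{k−2})·C_k = 0. -/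
lemma qpow_eq (q : ℝ) (hq : 0 < q) (j : ℕ) (a b : ℤ) (e : ℝ)
    (he : e = ((a * j + b : ℤ) : ℝ) / 4) :
    q ^ e = ((q ^ ((1:ℝ)/4)) ^ (j:ℤ)) ^ a * (q ^ ((1:ℝ)/4)) ^ b := by
  have hx : (0:ℝ) < q ^ ((1:ℝ)/4) := Real.rpow_pos_of_pos hq _
  have h1 : q ^ e = (q ^ ((1:ℝ)/4)) ^ ((a * j + b : ℤ) : ℝ) := by
    rw [← Real.rpow_mul hq.le, he]; ring_nf
  rw [h1, Real.rpow_intCast, zpow_add₀ hx.ne', mul_comm a (j:ℤ), zpow_mul]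

lemma qpow_nat (q : ℝ) (hq : 0 < q) (j : ℕ) (a b : ℕ) (e : ℝ)
    (he : e = ((a : ℝ) * j + b) / 4) :
    q ^ e = ((q ^ ((1:ℝ)/4)) ^ j) ^ a * (q ^ ((1:ℝ)/4)) ^ b := by
  have := qpow_eq q hq j a b e (by push_cast; exact he)
  rwa [zpow_natCast, zpow_natCast, zpow_natCast] at this

lemma qpow_mix (q : ℝ) (hq : 0 < q) (j : ℕ) (a b : ℕ) (e : ℝ)
    (he : e = ((a : ℝ) * j - b) / 4) :
    q ^ e = ((q ^ ((1:ℝ)/4)) ^ j) ^ a * ((q ^ ((1:ℝ)/4)) ^ b)⁻¹ := by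
  have := qpow_eq q hq j a (-b) e (by rw [he]; push_cast; ring)
  rwa [zpow_natCast, zpow_natCast, zpow_neg, zpow_natCast] at this

lemma qpow_inv (q : ℝ) (hq : 0 < q) (j : ℕ) (a b : ℕ) (e : ℝ)
    (he : e = -(((a : ℝ) * j + b) / 4)) :
    q ^ e = (((q ^ ((1:ℝ)/4)) ^ j) ^ a * (q ^ ((1:ℝ)/4)) ^ b)⁻¹ := by
  rw [he, Real.rpow_neg hq.le, qpow_nat q hq j a b _ rfl]

lemma qpow_c0 (q : ℝ) (hq : 0 < q) (j : ℕ) (e : ℝ)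
    (he : e = (1 - 2 * (j:ℝ)) / 4) :
    q ^ e = (q ^ ((1:ℝ)/4)) * (((q ^ ((1:ℝ)/4)) ^ j) ^ 2)⁻¹ := by
  have h2 : q ^ (-((j:ℝ)/2)) = (((q ^ ((1:ℝ)/4)) ^ j) ^ 2)⁻¹ := by
    rw [Real.rpow_neg hq.le, qpow_nat q hq j 2 0 ((j:ℝ)/2) (by ring)]
    rw [pow_zero, mul_one]
  rw [he, show (1 - 2*(j:ℝ))/4 = (1:ℝ)/4 + -((j:ℝ)/2) by ring, Real.rpow_add hq, h2]

/-- The vanishing identity `d_{k,6} = 0`: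
`(α² − 1) c_k C_{k−1} C_{k−2} + α (c_{k−1} C_k − α c_k C_{k−1}) C_{k−2}
  − (c_{k−2} C_{k−1} − α c_{k−1} C_{k−2}) C_k = 0` for `k ≥ 2`. -/
theorem d_k6_vanishes
    (q : ℝ) (hq0 : 0 < q) (hq1 : q < 1)
    (α : ℝ) (hα : α = (q ^ ((1 : ℝ)/2) + q ^ (-(1 : ℝ)/2)) / 2)
    (C : ℕ → ℝ)
    (hC : ∀ n : ℕ, C n = (1/4) * (1 + q ^ (((n : ℝ) - 1)/2))
      * (1 - q ^ ((n : ℝ)/2)) * (1 - q ^ ((n : ℝ) - 1/2)))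
    (c : ℕ → ℝ)
    (hc : ∀ n : ℕ, c n = C n * q ^ (-(2 * (n : ℝ) - 1)/4)) :
    ∀ k : ℕ, 2 ≤ k →
      (α ^ 2 - 1) * c k * C (k - 1) * C (k - 2)
        + α * (c (k - 1) * C k - α * c k * C (k - 1)) * C (k - 2)
        - (c (k - 2) * C (k - 1) - α * c (k - 1) * C (k - 2)) * C k = 0 := by
  intro k hk
  obtain ⟨j, rfl⟩ := Nat.exists_eq_add_of_le hk
  have h1 : 2 + j - 1 = j + 1 := by omega
  have h2 : 2 + j - 2 = j := by omega
  rw [h1, h2, hα, hc (2+j), hc (j+1), hc j, hC (2+j), hC (j+1), hC j]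
  rw [qpow_nat q hq0 j 0 2 ((1:ℝ)/2) (by push_cast; ring),
      qpow_inv q hq0 j 0 2 (-(1:ℝ)/2) (by push_cast; ring),
      qpow_nat q hq0 j 2 2 ((((2+j:ℕ):ℝ) - 1)/2) (by push_cast; ring),
      qpow_nat q hq0 j 2 4 (((2+j:ℕ):ℝ)/2) (by push_cast; ring),
      qpow_nat q hq0 j 4 6 (((2+j:ℕ):ℝ) - 1/2) (by push_cast; ring),
      qpow_inv q hq0 j 2 3 (-(2 * ((2+j:ℕ):ℝ) - 1)/4) (by push_cast; ring),
      qpow_nat q hq0 j 2 0 ((((j+1:ℕ):ℝ) - 1)/2) (by push_cast; ring),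
      qpow_nat q hq0 j 2 2 (((j+1:ℕ):ℝ)/2) (by push_cast; ring),
      qpow_nat q hq0 j 4 2 (((j+1:ℕ):ℝ) - 1/2) (by push_cast; ring),
      qpow_inv q hq0 j 2 1 (-(2 * ((j+1:ℕ):ℝ) - 1)/4) (by push_cast; ring),
      qpow_mix q hq0 j 2 2 ((((j:ℕ):ℝ) - 1)/2) (by push_cast; ring),
      qpow_nat q hq0 j 2 0 (((j:ℕ):ℝ)/2) (by push_cast; ring),
      qpow_mix q hq0 j 4 2 (((j:ℕ):ℝ) - 1/2) (by push_cast; ring),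
      qpow_c0 q hq0 j (-(2 * ((j:ℕ):ℝ) - 1)/4) (by push_cast; ring)]
  have hx : q ^ ((1:ℝ)/4) ≠ 0 := (Real.rpow_pos_of_pos hq0 _).ne'
  set x := q ^ ((1:ℝ)/4) with hxdef
  clear_value x
  set y := x ^ j with hydef
  have hy : y ≠ 0 := pow_ne_zero _ hx
  clear_value y
  field_simp
  ring
end

section
/- Let 0 < q < 1. Define α = (q^{1/2} + q^{-1/2})/2, α_n = (q^{n/2} + q^{-n/2})/2, γ_n = (q^{n/2} − q^{-n/2})/(q^{1/2} − q^{-1/2}), B_n = (1/2)((1 + q^{-1/2}) q^{n/2} + 1 − q^{-1/2}) q^{(2n+1)/4}, C_n = (1/4)(1 + q^{(n−1)/2})(1 − q^{n/2})(1 − q^{n−1/2}), c_n = C_n q^{-(2n−1)/4} (with C₀ = c₀ = 0, C_{-1} = c_{-1} = 0), and c_{n,3} = (B_n − α B_{n−1}) c_n + (1 − α²) γ_n C_n, c_{n,4} = c_{n−1} C_n − α c_n C_{n−1}. Then for all k ≥ 2: (α² − 1)·C_{k−1}·(α_k C_k + c_k (B_{k−1} + B_{k−2})) + α·c_{k,3}·C_{k−1}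 − c_{k−1,3}·C_k − (B_k − α B_{k−2})·c_{k,4} = 0. -/
set_option maxHeartbeats 4000000 in
/-- The vanishing identity `d_{k,5} = 0` from the inductive proof of
Proposition 1. -/
theorem d_k5_vanishes
    (q : ℝ) (hq0 : 0 < q) (hq1 : q < 1)
    (α : ℝ) (hα : α = (q ^ ((1 : ℝ)/2) + q ^ (-(1 : ℝ)/2)) / 2)
    (αs : ℕ → ℝ) (hαs : ∀ n : ℕ, αs n = (q ^ ((n : ℝ)/2) + q ^ (-(n : ℝ)/2)) / 2)
    (γ : ℕ → ℝ)
    (hγ : ∀ n : ℕ, γ n = (q ^ ((n : ℝ)/2) - q ^ (-(n : ℝ)/2)) /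
      (q ^ ((1 : ℝ)/2) - q ^ (-(1 : ℝ)/2)))
    (B : ℕ → ℝ)
    (hB : ∀ n : ℕ, B n = (1/2) * ((1 + q ^ (-(1 : ℝ)/2)) * q ^ ((n : ℝ)/2)
      + 1 - q ^ (-(1 : ℝ)/2)) * q ^ ((2 * (n : ℝ) + 1)/4))
    (C : ℕ → ℝ)
    (hC : ∀ n : ℕ, C n = (1/4) * (1 + q ^ (((n : ℝ) - 1)/2))
      * (1 - q ^ ((n : ℝ)/2)) * (1 - q ^ ((n : ℝ) - 1/2)))
    (c : ℕ → ℝ)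
    (hc : ∀ n : ℕ, c n = C n * q ^ (-(2 * (n : ℝ) - 1)/4))
    (c3 c4 : ℕ → ℝ)
    (hc3 : ∀ n : ℕ, c3 n = (B n - α * B (n - 1)) * c n + (1 - α ^ 2) * γ n * C n)
    (hc4 : ∀ n : ℕ, c4 n = c (n - 1) * C n - α * c n * C (n - 1)) :
    ∀ k : ℕ, 2 ≤ k →
      (α ^ 2 - 1) * C (k - 1) * (αs k * C k + c k * (B (k - 1) + B (k - 2)))
        + α * c3 k * C (k - 1) - c3 (k - 1) * C k
        - (B k - α * B (k - 2)) * c4 k = 0 := by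

  intro k hk
  set U : ℝ := q ^ ((1 : ℝ)/4) with hU
  set A : ℝ := q ^ ((k : ℝ)/4) with hA
  have hU0 : 0 < U := Real.rpow_pos_of_pos hq0 _
  have hA0 : 0 < A := Real.rpow_pos_of_pos hq0 _
  have key : ∀ a b c d : ℕ, q ^ ((((a : ℝ) - b) * (k : ℝ) + ((c : ℝ) - d)) / 4)
      = A ^ a * U ^ c / (A ^ b * U ^ d) := by
    intro a b c d
    rw [show (((a : ℝ) - b) * (k : ℝ) + ((c : ℝ) - d)) / 4
        = ((k : ℝ)/4 * a + (1 : ℝ)/4 * c) - ((k : ℝ)/4 * b + (1 : ℝ)/4 * d) by ring,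
      Real.rpow_sub hq0, Real.rpow_add hq0, Real.rpow_add hq0,
      Real.rpow_mul hq0.le, Real.rpow_mul hq0.le, Real.rpow_mul hq0.le,
      Real.rpow_mul hq0.le, Real.rpow_natCast, Real.rpow_natCast,
      Real.rpow_natCast, Real.rpow_natCast]
  have E : ∀ (x : ℝ) (a b c d : ℕ), x = (((a : ℝ) - b) * (k : ℝ) + ((c : ℝ) - d)) / 4 →
      q ^ x = A ^ a * U ^ c / (A ^ b * U ^ d) := by
    intro x a b c d hx; rw [hx]; exact key a b c d
  have e1 : q ^ ((k : ℝ)/2) = A ^ 2 := by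
    rw [E ((k : ℝ)/2) 2 0 0 0 (by push_cast; ring)]; norm_num
  have e2 : q ^ (-(k : ℝ)/2) = 1 / A ^ 2 := by
    rw [E (-(k : ℝ)/2) 0 2 0 0 (by push_cast; ring)]; norm_num
  have e3 : q ^ (((k : ℝ) - 1)/2) = A ^ 2 / U ^ 2 := by
    rw [E (((k : ℝ) - 1)/2) 2 0 0 2 (by push_cast; ring)]; norm_num
  have e4 : q ^ (-((k : ℝ) - 1)/2) = U ^ 2 / A ^ 2 := by
    rw [E (-((k : ℝ) - 1)/2) 0 2 2 0 (by push_cast; ring)]; norm_num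
  have e5 : q ^ ((((k : ℝ) - 1) - 1)/2) = A ^ 2 / U ^ 4 := by
    rw [E ((((k : ℝ) - 1) - 1)/2) 2 0 0 4 (by push_cast; ring)]; norm_num
  have e6 : q ^ (((k : ℝ) - 2)/2) = A ^ 2 / U ^ 4 := by
    rw [E (((k : ℝ) - 2)/2) 2 0 0 4 (by push_cast; ring)]; norm_num
  have e7 : q ^ ((k : ℝ) - 1/2) = A ^ 4 / U ^ 2 := by
    rw [E ((k : ℝ) - 1/2) 4 0 0 2 (by push_cast; ring)]; norm_num
  have e8 : q ^ (((k : ℝ) - 1) - 1/2) = A ^ 4 / U ^ 6 := by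
    rw [E (((k : ℝ) - 1) - 1/2) 4 0 0 6 (by push_cast; ring)]; norm_num
  have e9 : q ^ ((2 * (k : ℝ) + 1)/4) = A ^ 2 * U := by
    rw [E ((2 * (k : ℝ) + 1)/4) 2 0 1 0 (by push_cast; ring)]; norm_num
  have e10 : q ^ ((2 * ((k : ℝ) - 1) + 1)/4) = A ^ 2 / U := by
    rw [E ((2 * ((k : ℝ) - 1) + 1)/4) 2 0 0 1 (by push_cast; ring)]; norm_num
  have e11 : q ^ ((2 * ((k : ℝ) - 2) + 1)/4) = A ^ 2 / U ^ 3 := by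
    rw [E ((2 * ((k : ℝ) - 2) + 1)/4) 2 0 0 3 (by push_cast; ring)]; norm_num
  have e12 : q ^ (-(2 * (k : ℝ) - 1)/4) = U / A ^ 2 := by
    rw [E ((-(2 * (k : ℝ) - 1)/4)) 0 2 1 0 (by push_cast; ring)]; norm_num
  have e13 : q ^ (-(2 * ((k : ℝ) - 1) - 1)/4) = U ^ 3 / A ^ 2 := by
    rw [E ((-(2 * ((k : ℝ) - 1) - 1)/4)) 0 2 3 0 (by push_cast; ring)]; norm_num
  have e14 : q ^ ((1 : ℝ)/2) = U ^ 2 := by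
    rw [E ((1 : ℝ)/2) 0 0 2 0 (by push_cast; ring)]; norm_num
  have e15 : q ^ (-(1 : ℝ)/2) = 1 / U ^ 2 := by
    rw [E ((-(1 : ℝ)/2)) 0 0 0 2 (by push_cast; ring)]; norm_num
  have hU1 : U < 1 := Real.rpow_lt_one hq0.le hq1 (by norm_num)
  have hd : U ^ 2 - 1 / U ^ 2 ≠ 0 := by
    have h1 : U ^ 2 < 1 := by nlinarith
    have h2 : (1 : ℝ) < 1 / U ^ 2 := by
      rw [lt_div_iff₀ (by positivity)]; linarith
    intro h; linarith
  have ck1 : ((k - 1 : ℕ) : ℝ) = (k : ℝ) - 1 := by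
    rw [Nat.cast_sub (by omega)]; norm_num
  have ck2 : ((k - 2 : ℕ) : ℝ) = (k : ℝ) - 2 := by
    rw [Nat.cast_sub (by omega)]; norm_num
  have hsub : k - 1 - 1 = k - 2 := by omega
  have hkey : α * γ k - γ (k - 1) = αs k := by
    rw [hα, hγ k, hγ (k - 1), hαs k, ck1, e1, e2, e3, e4, e14, e15,
      ← mul_div_assoc, div_sub_div_same, div_eq_iff hd]
    field_simp
    ring
  have hR : (α ^ 2 - 1) * C (k - 1) * (c k * (B (k - 1) + B (k - 2)))
      + α * ((B k - α * B (k - 1)) * c k) * C (k - 1)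
      - ((B (k - 1) - α * B (k - 2)) * c (k - 1)) * C k
      - (B k - α * B (k - 2)) * (c (k - 1) * C k - α * c k * C (k - 1)) = 0 := by
    rw [hc k, hc (k - 1), hB k, hB (k - 1), hB (k - 2), hC k, hC (k - 1), hα,
      ck1, ck2]
    rw [e1, e3, e5, e6, e7, e8, e9, e10, e11, e12, e13, e14, e15]
    field_simp
    ring
  rw [hc3 k, hc3 (k - 1), hc4 k, hsub]
  linear_combination hR + (1 - α ^ 2) * C k * C (k - 1) * hkey
end

section
/- Let 0 < q < 1. Define B_n, C_n as for the polynomials P_n = H_n(·; 1, −1, q^{1/4} | q^{1/2}), and define P̆_n : ℝ_{>0} → ℝ by P̆₀(z) = 1, P̆₁(z) = (z + z^{-1})/2 − B₀, and P̆_{n+1}(z) = ((z + z^{-1})/2 − B_n)·P̆_n(z) − C_n·P̆_{n−1}(z). With α_n = (q^{n/2} + q^{-n/2})/2 and c_n = C_n q^{-(2n−1)/4} (c₀ = 0), one has for every n ≥ 0 and every z > 0: (P̆_n(q^{1/2} z) + P̆_n(q^{-1/2} z))/2 = α_n·P̆_n(z) + c_n·P̆_{n−1}(z) (with P̆_{-1}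 := 0). -/
/-- Equation (main-eq1) of Proposition 1: `S_q P_n = α_n P_n + c_n P_{n−1}`
for the monic continuous dual `q^{1/2}`-Hahn polynomials
`P_n = H_n(·; 1, −1, q^{1/4} | q^{1/2})`, written in the variable `z`
(with `x = (z + z⁻¹)/2`).  Here `P_{-1} := 0`, which is accounted for by
`c 0 = 0`. -/
theorem Sq_structure_relation
    (q : ℝ) (hq0 : 0 < q) (hq1 : q < 1)
    (B : ℕ → ℝ)
    (hB : ∀ n : ℕ, B n = (1/2) * ((1 + q ^ (-(1 : ℝ)/2)) * q ^ ((n : ℝ)/2)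
      + 1 - q ^ (-(1 : ℝ)/2)) * q ^ ((2 * (n : ℝ) + 1)/4))
    (C : ℕ → ℝ)
    (hC : ∀ n : ℕ, C n = (1/4) * (1 + q ^ (((n : ℝ) - 1)/2))
      * (1 - q ^ ((n : ℝ)/2)) * (1 - q ^ ((n : ℝ) - 1/2)))
    (αs : ℕ → ℝ) (hαs : ∀ n : ℕ, αs n = (q ^ ((n : ℝ)/2) + q ^ (-(n : ℝ)/2)) / 2)
    (c : ℕ → ℝ)
    (hc : ∀ n : ℕ, c n = C n * q ^ (-(2 * (n : ℝ) - 1)/4))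
    (P : ℕ → ℝ → ℝ)
    (hP0 : ∀ z : ℝ, P 0 z = 1)
    (hP1 : ∀ z : ℝ, P 1 z = (z + z⁻¹) / 2 - B 0)
    (hPrec : ∀ n : ℕ, 1 ≤ n → ∀ z : ℝ,
      P (n + 1) z = ((z + z⁻¹) / 2 - B n) * P n z - C n * P (n - 1) z) :
    ∀ n : ℕ, ∀ z : ℝ, 0 < z →
      (P n (q ^ ((1 : ℝ)/2) * z) + P n (q ^ (-(1 : ℝ)/2) * z)) / 2
        = αs n * P n z + c n * P (n - 1) z := by
  set t : ℝ := q ^ ((1 : ℝ)/4) with htdef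
  have ht0 : 0 < t := Real.rpow_pos_of_pos hq0 _
  have htne : t ≠ 0 := ne_of_gt ht0
  have hpow : ∀ k : ℕ, q ^ ((k : ℝ)/4) = t ^ k := by
    intro k
    rw [show ((k : ℝ)/4) = (1 : ℝ)/4 * (k : ℝ) by ring, Real.rpow_mul hq0.le,
      Real.rpow_natCast, ← htdef]
  have hpowneg : ∀ k : ℕ, q ^ (-((k : ℝ)/4)) = (t ^ k)⁻¹ := by
    intro k; rw [Real.rpow_neg hq0.le, hpow]
  have eQ : q ^ ((1 : ℝ)/2) = t ^ 2 := by
    rw [show ((1 : ℝ)/2) = ((2 : ℕ) : ℝ)/4 by norm_num, hpow]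
  have eh : q ^ (-(1 : ℝ)/2) = (t ^ 2)⁻¹ := by
    rw [show (-(1 : ℝ)/2) = -(((2 : ℕ) : ℝ)/4) by norm_num, hpowneg]
  have e1 : ∀ n : ℕ, q ^ ((n : ℝ)/2) = t ^ (2*n) := by
    intro n; rw [show ((n : ℝ)/2) = ((2*n : ℕ) : ℝ)/4 by push_cast; ring, hpow]
  have e2 : ∀ n : ℕ, q ^ (-(n : ℝ)/2) = (t ^ (2*n))⁻¹ := by
    intro n; rw [show (-(n : ℝ)/2) = -(((2*n : ℕ) : ℝ)/4) by push_cast; ring, hpowneg]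
  have e3 : ∀ n : ℕ, q ^ ((2 * (n : ℝ) + 1)/4) = t ^ (2*n+1) := by
    intro n; rw [show ((2 * (n : ℝ) + 1)/4) = ((2*n+1 : ℕ) : ℝ)/4 by push_cast; ring, hpow]
  have e4 : ∀ n : ℕ, q ^ (((n : ℝ) - 1)/2) = t ^ (2*n) / t ^ 2 := by
    intro n
    rw [show (((n : ℝ) - 1)/2) = ((2*n : ℕ) : ℝ)/4 - ((2 : ℕ) : ℝ)/4 by push_cast; ring,
      Real.rpow_sub hq0, hpow, hpow]
  have e5 : ∀ n : ℕ, q ^ ((n : ℝ) - 1/2) = t ^ (4*n) / t ^ 2 := by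
    intro n
    rw [show ((n : ℝ) - 1/2) = ((4*n : ℕ) : ℝ)/4 - ((2 : ℕ) : ℝ)/4 by push_cast; ring,
      Real.rpow_sub hq0, hpow, hpow]
  have e6 : ∀ n : ℕ, q ^ (-(2 * (n : ℝ) - 1)/4) = t / t ^ (2*n) := by
    intro n
    rw [show (-(2 * (n : ℝ) - 1)/4) = ((1 : ℕ) : ℝ)/4 - ((2*n : ℕ) : ℝ)/4 by push_cast; ring,
      Real.rpow_sub hq0, hpow, hpow, pow_one]
  -- polynomial forms of the coefficient functions
  have hBp : ∀ n : ℕ, 2*t*B n = ((t^2+1)*t^(2*n) + t^2 - 1)*t^(2*n) := by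
    intro n
    rw [hB n, eh, e1 n, e3 n]
    field_simp
    ring
  have hCp : ∀ n : ℕ, 4*t^4*C n = (t^2+t^(2*n))*(1-t^(2*n))*(t^2-t^(4*n)) := by
    intro n
    rw [hC n, e4 n, e1 n, e5 n]
    field_simp
  have hαp : ∀ n : ℕ, 2*t^(2*n)*αs n = t^(4*n)+1 := by
    intro n
    rw [hαs n, e1 n, e2 n]
    have h2n : t ^ (2*n) ≠ 0 := pow_ne_zero _ htne
    field_simp
    ring
  have hcp : ∀ n : ℕ, t^(2*n)*c n = t*C n := by
    intro n
    rw [hc n, e6 n]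
    have h2n : t ^ (2*n) ≠ 0 := pow_ne_zero _ htne
    field_simp
  have hC0 : C 0 = 0 := by
    have h := hCp 0
    have h4 : (4 : ℝ)*t^4 ≠ 0 := mul_ne_zero (by norm_num) (pow_ne_zero _ htne)
    apply mul_left_cancel₀ h4
    rw [h]; norm_num
  -- the recurrence, valid also at n = 0
  have hGRec : ∀ k : ℕ, ∀ y : ℝ,
      P (k+1) y = ((y + y⁻¹)/2 - B k)*P k y - C k * P (k-1) y := by
    intro k y
    cases k with
    | zero => simp only [Nat.zero_add, Nat.zero_sub, hP1, hP0, hC0]; ring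
    | succ j => exact hPrec (j+1) (by omega) y
  have htt : (t^2) * (t^2)⁻¹ = 1 := mul_inv_cancel₀ (pow_ne_zero _ htne)
  -- cleared recurrence at the three points z, t^2*z, (t^2)⁻¹*z
  have hR0 : ∀ k : ℕ, ∀ z : ℝ, z ≠ 0 → 4*t^4*z*P (k+1) z
      = (2*t^4*(z^2+1) - 2*t^3*z*(((t^2+1)*t^(2*k)+t^2-1)*t^(2*k)))*P k z
        - z*((t^2+t^(2*k))*(1-t^(2*k))*(t^2-t^(4*k)))*P (k-1) z := by
    intro k z hz
    have h := hGRec k z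
    have hzz : z * z⁻¹ = 1 := mul_inv_cancel₀ hz
    linear_combination (4*t^4*z)*h + (2*t^4*(P k z))*hzz
      - (2*t^3*z*(P k z))*hBp k - (z*(P (k-1) z))*hCp k
  have hRP : ∀ k : ℕ, ∀ z : ℝ, z ≠ 0 → 4*t^4*z*P (k+1) (t^2*z)
      = (2*t^6*z^2 + 2*t^2 - 2*t^3*z*(((t^2+1)*t^(2*k)+t^2-1)*t^(2*k)))*P k (t^2*z)
        - z*((t^2+t^(2*k))*(1-t^(2*k))*(t^2-t^(4*k)))*P (k-1) (t^2*z) := by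
    intro k z hz
    have h := hGRec k (t^2*z)
    rw [mul_inv] at h
    have hzz : z * z⁻¹ = 1 := mul_inv_cancel₀ hz
    linear_combination (4*t^4*z)*h + (2*t^4*(t^2)⁻¹*(P k (t^2*z)))*hzz
      + (2*t^2*(P k (t^2*z)))*htt
      - (2*t^3*z*(P k (t^2*z)))*hBp k - (z*(P (k-1) (t^2*z)))*hCp k
  have hRM : ∀ k : ℕ, ∀ z : ℝ, z ≠ 0 → 4*t^4*z*P (k+1) ((t^2)⁻¹*z)
      = (2*t^2*z^2 + 2*t^6 - 2*t^3*z*(((t^2+1)*t^(2*k)+t^2-1)*t^(2*k)))*P k ((t^2)⁻¹*z)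
        - z*((t^2+t^(2*k))*(1-t^(2*k))*(t^2-t^(4*k)))*P (k-1) ((t^2)⁻¹*z) := by
    intro k z hz
    have h := hGRec k ((t^2)⁻¹*z)
    rw [mul_inv, inv_inv] at h
    have hzz : z * z⁻¹ = 1 := mul_inv_cancel₀ hz
    linear_combination (4*t^4*z)*h + (2*t^6*(P k ((t^2)⁻¹*z)))*hzz
      + (2*t^2*z^2*(P k ((t^2)⁻¹*z)))*htt
      - (2*t^3*z*(P k ((t^2)⁻¹*z)))*hBp k - (z*(P (k-1) ((t^2)⁻¹*z)))*hCp k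
  -- the main two-part invariant
  have main : ∀ n : ℕ, ∀ z : ℝ, 0 < z →
      (4*t^3*t^(2*n)*(P n (t^2*z) + P n ((t^2)⁻¹*z))
         = 4*t^3*(t^(4*n)+1)*P n z
           + 2*((t^2+t^(2*n))*(1-t^(2*n))*(t^2-t^(4*n)))*P (n-1) z)
      ∧ (t^(2*n)*((z+t)*(P n (t^2*z) - P n z) + z*(1+t*z)*(P n ((t^2)⁻¹*z) - P n z))
         = (1-t^(2*n))*(z+t)*(1+t*z)*P n z) := by
    intro n
    induction n using Nat.twoStepInduction with
    | zero =>
      intro z hz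
      constructor
      · simp only [Nat.zero_sub, hP0]; ring
      · simp only [hP0]; ring
    | one =>
      intro z hz
      have hB0 : B 0 = t := by
        have h : 2*t*B 0 = 2*t*t := by linear_combination hBp 0
        exact mul_left_cancel₀ (mul_ne_zero (by norm_num) htne) h
      have hzne : z ≠ 0 := ne_of_gt hz
      constructor
      · simp only [show (1:ℕ)-1 = 0 from rfl, hP1, hP0, hB0]
        field_simp
        ring
      · simp only [hP1, hB0]
        field_simp
        ring
    | more m ih0 ih1 =>
      intro z hz
      have hzne : z ≠ 0 := ne_of_gt hz
      obtain ⟨A1, D1⟩ := ih1 z hz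
      obtain ⟨A0, D0⟩ := ih0 z hz
      have H1 := hRP (m+1) z hzne
      have H2 := hRM (m+1) z hzne
      have H3 := hR0 (m+1) z hzne
      have H8 := hR0 m z hzne
      simp only [Nat.add_sub_cancel] at H1 H2 H3 A1 D1
      rw [show m+2-1 = m+1 by omega]
      constructor
      · apply mul_left_cancel₀ (mul_ne_zero htne hzne)
        linear_combination (t^(2*m+4))*H1 + (t^(2*m+4))*H2 + (-1 + -1*t^(4*m+8))*H3
          + ((1/2)*t^5 + (-1/2)*z + (1/2)*z*t^4 + (1/2)*z*t^(2*m+4)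
            + (-1/2)*z*t^(2*m+6) + (-1/2)*z*t^(4*m+6) + (-1/2)*z*t^(4*m+8)
            + (1/2)*z^2*t^5)*A1
          + (2*t^3 - 2*t^7)*D1
          + ((-1/4)*z*t^5 + (-1/4)*z*t^(2*m+5) + (1/4)*z*t^(2*m+7) + (1/2)*z*t^(4*m+7)
            + (1/4)*z*t^(6*m+7) + (-1/4)*z*t^(6*m+9) + (-1/4)*z*t^(8*m+9))*A0
          + ((-1/2)*t^5 + (-1/2)*t^(2*m+5) + (1/2)*t^(2*m+7) + t^(4*m+7)
            + (1/2)*t^(6*m+7) + (-1/2)*t^(6*m+9) + (-1/2)*t^(8*m+9))*H8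
      · apply mul_left_cancel₀
          (show (4:ℝ)*z*t^4 ≠ 0 from
            mul_ne_zero (mul_ne_zero (by norm_num) hzne) (pow_ne_zero _ htne))
        linear_combination (t^(2*m+5) + z*t^(2*m+4))*H1 + (z*t^(2*m+4) + z^2*t^(2*m+5))*H2
          + (-t - z - z*t^2 - z*t^(2*m+4) + z*t^(2*m+6) - z^2*t)*H3
          + ((-1/2)*z*t + (1/2)*z*t^5 + (-1/2)*z^2 + (-1/2)*z^2*t^2 + (1/2)*z^2*t^4
            + (1/2)*z^2*t^6 + (-1/2)*z^3*t + (1/2)*z^3*t^5)*A1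
          + (2*t^4 + 2*z*t^3 - 2*z*t^7 + 2*z*t^(2*m+7) - 2*z*t^(2*m+9)
            - 2*z*t^(4*m+9) - 2*z*t^(4*m+11) + 2*z^2*t^4)*D1
          + (-z*t^8 - z*t^(2*m+8) + z*t^(2*m+10) + 2*z*t^(4*m+10) + z*t^(6*m+10)
            - z*t^(6*m+12) - z*t^(8*m+12))*D0
  -- conclusion
  intro n z hz
  obtain ⟨A, _⟩ := main n z hz
  rw [eQ, eh]
  have h8 : (8:ℝ)*t^3*t^(2*n) ≠ 0 :=
    mul_ne_zero (mul_ne_zero (by norm_num) (pow_ne_zero _ htne)) (pow_ne_zero _ htne)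
  apply mul_left_cancel₀ h8
  have hcc : 4*t^3*t^(2*n)*c n = (t^2+t^(2*n))*(1-t^(2*n))*(t^2-t^(4*n)) := by
    linear_combination (4*t^3)*hcp n + hCp n
  linear_combination A - (4*t^3*(P n z))*hαp n - (2*(P (n-1) z))*hcc
end

section
/- Let 0 < q < 1. With the setup of Proposition 1 (P̆_n defined by the three-term recurrence with coefficients B_n, C_n; α = (q^{1/2}+q^{-1/2})/2; α_n, γ_n, c_n as defined; U₂(z) = (α² − 1)(((z + z^{-1})/2)² − 1)), one has for every n ≥ 0 and every z > 0 with z ≠ 1: U₂(z)·(P̆_n(q^{1/2} z) − P̆_n(q^{-1/2} z))/(((q^{1/2} − q^{-1/2})/2)(z − z^{-1})) = (α² − 1)γ_n·P̆_{n+1}(z) + (c_{n+1} − α c_n + (1 − α) α_n B_n)·P̆_n(z) + ((B_n − α B_{n−1}) c_n + (1 − α²) γ_n C_n)·P̆_{n−1}(z) + (c_{n−1} C_n − α c_n C_{n−1})·P̆_{n−2}(z), where P̆ with negative index is 0 and B, C, c with negative index are 0. -/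
noncomputable section UqDqAux

def Bf (u x : ℝ) : ℝ := 1/2*((1+(u^2)⁻¹)*x + 1 - (u^2)⁻¹)*(x*u)
def Cf (u x : ℝ) : ℝ := 1/4*(1+x*(u^2)⁻¹)*(1-x)*(1-x^2*(u^2)⁻¹)
def cf (u x : ℝ) : ℝ := Cf u x * (u*x⁻¹)
def af (x : ℝ) : ℝ := (x+x⁻¹)/2
def alf (u : ℝ) : ℝ := (u^2+(u^2)⁻¹)/2
def Gf (u x : ℝ) : ℝ := (u^2-(u^2)⁻¹)*(x-x⁻¹)/4

/-- Auxiliary predicate: averaging relation and structure relation at level `m`. -/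
def PhiAux (u : ℝ) (t : ℤ → ℝ) (P : ℤ → ℝ → ℝ) (m : ℤ) : Prop :=
  ∀ z : ℝ, 0 < z → z ≠ 1 →
    (P m (u^2 * z) + P m ((u^2)⁻¹ * z)) / 2
      = af (t m) * P m z + cf u (t m) * P (m-1) z
    ∧ (u^2 - (u^2)⁻¹) * (z - z⁻¹) / 8 * (P m (u^2 * z) - P m ((u^2)⁻¹ * z))
      = Gf u (t m) * P (m+1) z
        + (cf u (t (m+1)) - alf u * cf u (t m) + (1 - alf u) * af (t m) * Bf u (t m)) * P m z
        + ((Bf u (t m) - alf u * Bf u (t (m-1))) * cf u (t m) - Gf u (t m) * Cf u (t m)) * P (m-1) z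
        + (cf u (t (m-1)) * Cf u (t m) - alf u * cf u (t m) * Cf u (t (m-1))) * P (m-2) z

set_option maxHeartbeats 1600000 in
theorem PhiAux_base0 (u : ℝ) (hu : 0 < u) (hu1 : u < 1)
    (t : ℤ → ℝ) (htpos : ∀ k : ℤ, 0 < t k) (ht0 : t 0 = 1)
    (htrec : ∀ k : ℤ, t (k+1) = t k * u^2)
    (P : ℤ → ℝ → ℝ)
    (hPneg : ∀ n : ℤ, n < 0 → ∀ z : ℝ, P n z = 0)
    (hP0 : ∀ z : ℝ, P 0 z = 1)
    (hPrec : ∀ n : ℤ, 0 ≤ n → ∀ z : ℝ,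
      P (n + 1) z = ((z + z⁻¹) / 2 - Bf u (t n)) * P n z - Cf u (t n) * P (n - 1) z) :
    PhiAux u t P 0 := by
  have hu0 : u ≠ 0 := ne_of_gt hu
  have hu2 : (u:ℝ)^2 ≠ 0 := pow_ne_zero 2 hu0
  have ht1 : t 1 = u^2 := by have h := htrec 0; rw [ht0, one_mul] at h; simpa using h
  have ht2 : t 2 = u^2*u^2 := by have h := htrec 1; rw [ht1] at h; simpa using h
  have ht3 : t 3 = u^2*u^2*u^2 := by have h := htrec 2; rw [ht2] at h; simpa using h
  have e1 : ∀ w : ℝ, P 1 w = (w+w⁻¹)/2 - Bf u (t 0) := by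
    intro w
    have h := hPrec 0 le_rfl w
    rw [hP0, hPneg (0-1) (by norm_num)] at h
    simpa using h
  have e2 : ∀ w : ℝ, P 2 w = ((w+w⁻¹)/2 - Bf u (t 1)) * P 1 w - Cf u (t 1) := by
    intro w
    have h := hPrec 1 (by norm_num) w
    rw [show (1:ℤ)-1 = 0 from by norm_num, hP0] at h
    simpa using h
  have e3 : ∀ w : ℝ, P 3 w = ((w+w⁻¹)/2 - Bf u (t 2)) * P 2 w - Cf u (t 2) * P 1 w := by
    intro w
    have h := hPrec 2 (by norm_num) w
    rw [show (2:ℤ)-1 = 1 from by norm_num] at h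
    simpa using h
  intro z hz hz1
  have hz0 : z ≠ 0 := ne_of_gt hz
  constructor
  · simp only [hP0, hPneg (0-1) (by norm_num), mul_zero, add_zero, af, ht0]
    norm_num
  · simp only [hP0, hPneg (0-1) (by norm_num), hPneg (0-2) (by norm_num),
      mul_zero, add_zero, show (0:ℤ)+1 = 1 from by norm_num, e1,
      af, alf, Bf, Cf, cf, Gf, ht0, ht1]
    field_simp
    ring

set_option maxHeartbeats 1600000 in
theorem PhiAux_base1 (u : ℝ) (hu : 0 < u) (hu1 : u < 1)
    (t : ℤ → ℝ) (htpos : ∀ k : ℤ, 0 < t k) (ht0 : t 0 = 1)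
    (htrec : ∀ k : ℤ, t (k+1) = t k * u^2)
    (P : ℤ → ℝ → ℝ)
    (hPneg : ∀ n : ℤ, n < 0 → ∀ z : ℝ, P n z = 0)
    (hP0 : ∀ z : ℝ, P 0 z = 1)
    (hPrec : ∀ n : ℤ, 0 ≤ n → ∀ z : ℝ,
      P (n + 1) z = ((z + z⁻¹) / 2 - Bf u (t n)) * P n z - Cf u (t n) * P (n - 1) z) :
    PhiAux u t P 1 := by
  have hu0 : u ≠ 0 := ne_of_gt hu
  have hu2 : (u:ℝ)^2 ≠ 0 := pow_ne_zero 2 hu0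
  have ht1 : t 1 = u^2 := by have h := htrec 0; rw [ht0, one_mul] at h; simpa using h
  have ht2 : t 2 = u^2*u^2 := by have h := htrec 1; rw [ht1] at h; simpa using h
  have ht3 : t 3 = u^2*u^2*u^2 := by have h := htrec 2; rw [ht2] at h; simpa using h
  have e1 : ∀ w : ℝ, P 1 w = (w+w⁻¹)/2 - Bf u (t 0) := by
    intro w
    have h := hPrec 0 le_rfl w
    rw [hP0, hPneg (0-1) (by norm_num)] at h
    simpa using h
  have e2 : ∀ w : ℝ, P 2 w = ((w+w⁻¹)/2 - Bf u (t 1)) * P 1 w - Cf u (t 1) := by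
    intro w
    have h := hPrec 1 (by norm_num) w
    rw [show (1:ℤ)-1 = 0 from by norm_num, hP0] at h
    simpa using h
  have e3 : ∀ w : ℝ, P 3 w = ((w+w⁻¹)/2 - Bf u (t 2)) * P 2 w - Cf u (t 2) * P 1 w := by
    intro w
    have h := hPrec 2 (by norm_num) w
    rw [show (2:ℤ)-1 = 1 from by norm_num] at h
    simpa using h
  intro z hz hz1
  have hz0 : z ≠ 0 := ne_of_gt hz
  constructor
  · simp only [show (1:ℤ)-1 = 0 from by norm_num, hP0, e1,
      af, alf, Bf, Cf, cf, Gf, ht0, ht1]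
    field_simp
    ring
  · simp only [show (1:ℤ)-1 = 0 from by norm_num, show (1:ℤ)+1 = 2 from by norm_num,
      hPneg (1-2) (by norm_num), mul_zero, add_zero, hP0, e2, e1,
      af, alf, Bf, Cf, cf, Gf, ht0, ht1, ht2]
    field_simp
    ring

set_option maxHeartbeats 1600000 in
theorem PhiAux_base2 (u : ℝ) (hu : 0 < u) (hu1 : u < 1)
    (t : ℤ → ℝ) (htpos : ∀ k : ℤ, 0 < t k) (ht0 : t 0 = 1)
    (htrec : ∀ k : ℤ, t (k+1) = t k * u^2)
    (P : ℤ → ℝ → ℝ)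
    (hPneg : ∀ n : ℤ, n < 0 → ∀ z : ℝ, P n z = 0)
    (hP0 : ∀ z : ℝ, P 0 z = 1)
    (hPrec : ∀ n : ℤ, 0 ≤ n → ∀ z : ℝ,
      P (n + 1) z = ((z + z⁻¹) / 2 - Bf u (t n)) * P n z - Cf u (t n) * P (n - 1) z) :
    PhiAux u t P 2 := by
  have hu0 : u ≠ 0 := ne_of_gt hu
  have hu2 : (u:ℝ)^2 ≠ 0 := pow_ne_zero 2 hu0
  have ht1 : t 1 = u^2 := by have h := htrec 0; rw [ht0, one_mul] at h; simpa using h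
  have ht2 : t 2 = u^2*u^2 := by have h := htrec 1; rw [ht1] at h; simpa using h
  have ht3 : t 3 = u^2*u^2*u^2 := by have h := htrec 2; rw [ht2] at h; simpa using h
  have e1 : ∀ w : ℝ, P 1 w = (w+w⁻¹)/2 - Bf u (t 0) := by
    intro w
    have h := hPrec 0 le_rfl w
    rw [hP0, hPneg (0-1) (by norm_num)] at h
    simpa using h
  have e2 : ∀ w : ℝ, P 2 w = ((w+w⁻¹)/2 - Bf u (t 1)) * P 1 w - Cf u (t 1) := by
    intro w
    have h := hPrec 1 (by norm_num) w
    rw [show (1:ℤ)-1 = 0 from by norm_num, hP0] at h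
    simpa using h
  have e3 : ∀ w : ℝ, P 3 w = ((w+w⁻¹)/2 - Bf u (t 2)) * P 2 w - Cf u (t 2) * P 1 w := by
    intro w
    have h := hPrec 2 (by norm_num) w
    rw [show (2:ℤ)-1 = 1 from by norm_num] at h
    simpa using h
  intro z hz hz1
  have hz0 : z ≠ 0 := ne_of_gt hz
  constructor
  · simp only [show (2:ℤ)-1 = 1 from by norm_num, e2, e1,
      af, alf, Bf, Cf, cf, Gf, ht0, ht1, ht2]
    field_simp
    ring
  · simp only [show (2:ℤ)-1 = 1 from by norm_num, show (2:ℤ)+1 = 3 from by norm_num,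
      show (2:ℤ)-2 = 0 from by norm_num, hP0, e3, e2, e1,
      af, alf, Bf, Cf, cf, Gf, ht0, ht1, ht2, ht3]
    field_simp
    ring

set_option maxHeartbeats 6000000 in
theorem PhiAux_step (u : ℝ) (hu : 0 < u) (hu1 : u < 1)
    (t : ℤ → ℝ) (htpos : ∀ k : ℤ, 0 < t k) (ht0 : t 0 = 1)
    (htrec : ∀ k : ℤ, t (k+1) = t k * u^2)
    (P : ℤ → ℝ → ℝ)
    (hPneg : ∀ n : ℤ, n < 0 → ∀ z : ℝ, P n z = 0)
    (hP0 : ∀ z : ℝ, P 0 z = 1)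
    (hPrec : ∀ n : ℤ, 0 ≤ n → ∀ z : ℝ,
      P (n + 1) z = ((z + z⁻¹) / 2 - Bf u (t n)) * P n z - Cf u (t n) * P (n - 1) z) :
    ∀ m : ℤ, 2 ≤ m → PhiAux u t P (m-1) → PhiAux u t P m → PhiAux u t P (m+1) := by
  intro m hm ih1 ih2 z hz hz1
  have hu0 : u ≠ 0 := ne_of_gt hu
  have hu2 : (u:ℝ)^2 ≠ 0 := pow_ne_zero 2 hu0
  have hz0 : z ≠ 0 := ne_of_gt hz
  have htm0 : t m ≠ 0 := ne_of_gt (htpos m)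
  obtain ⟨h1a, h1g⟩ := ih1 z hz hz1
  obtain ⟨h2a, h2g⟩ := ih2 z hz hz1
  rw [show m-1-1 = m-2 from by ring] at h1a
  rw [show m-1+1 = m from by ring, show m-1-1 = m-2 from by ring,
      show m-1-2 = m-3 from by ring] at h1g
  have htp1 : t (m+1) = t m * u^2 := htrec m
  have htp2 : t (m+2) = t m * u^2 * u^2 := by
    rw [show m+2 = m+1+1 from by ring, htrec, htp1]
  have htm1 : t (m-1) = t m * (u^2)⁻¹ := by
    have h := htrec (m-1)
    rw [show m-1+1 = m from by ring] at h
    rw [h, mul_assoc, mul_inv_cancel₀ hu2, mul_one]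
  have htm2 : t (m-2) = t m * (u^2)⁻¹ * (u^2)⁻¹ := by
    have h := htrec (m-2)
    rw [show m-2+1 = m-1 from by ring, htm1] at h
    have h4 : t (m-2) * (u^2 * (u^2)⁻¹) = t m * (u^2)⁻¹ * (u^2)⁻¹ := by
      rw [show t (m-2) * (u^2 * (u^2)⁻¹) = t (m-2) * u^2 * (u^2)⁻¹ from by ring, ← h]
    rwa [mul_inv_cancel₀ hu2, mul_one] at h4
  have hrA : P (m-1) z = ((z+z⁻¹)/2 - Bf u (t (m-2))) * P (m-2) z - Cf u (t (m-2)) * P (m-3) z := by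
    have h := hPrec (m-2) (by omega) z
    rw [show m-2+1 = m-1 from by ring, show m-2-1 = m-3 from by ring] at h
    exact h
  have hrB : P m z = ((z+z⁻¹)/2 - Bf u (t (m-1))) * P (m-1) z - Cf u (t (m-1)) * P (m-2) z := by
    have h := hPrec (m-1) (by omega) z
    rw [show m-1+1 = m from by ring, show m-1-1 = m-2 from by ring] at h
    exact h
  have hrC : P (m+1) z = ((z+z⁻¹)/2 - Bf u (t m)) * P m z - Cf u (t m) * P (m-1) z :=
    hPrec m (by omega) z
  have hrD : P (m+2) z = ((z+z⁻¹)/2 - Bf u (t (m+1))) * P (m+1) z - Cf u (t (m+1)) * P m z := by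
    have h := hPrec (m+1) (by omega) z
    rw [show m+1+1 = m+2 from by ring, show m+1-1 = m from by ring] at h
    exact h
  have hsP : P (m+1) (u^2*z)
      = ((u^2*z + (u^2*z)⁻¹)/2 - Bf u (t m)) * P m (u^2*z) - Cf u (t m) * P (m-1) (u^2*z) :=
    hPrec m (by omega) (u^2*z)
  have hsM : P (m+1) ((u^2)⁻¹*z)
      = (((u^2)⁻¹*z + ((u^2)⁻¹*z)⁻¹)/2 - Bf u (t m)) * P m ((u^2)⁻¹*z)
        - Cf u (t m) * P (m-1) ((u^2)⁻¹*z) :=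
    hPrec m (by omega) ((u^2)⁻¹*z)
  simp only [htp1, htp2, htm1, htm2] at h1a h1g h2a h2g hrA hrB hrC hrD hsP hsM
  constructor
  · rw [show m+1-1 = m from by ring, htp1, hsP, hsM]
    linear_combination (norm := (simp only [Bf, Cf, cf, af, alf, Gf]; field_simp; try ring))
      ((alf u)*((z+z⁻¹)/2) - (Bf u (t m))) * h2a + h2g - (Cf u (t m)) * h1a + ((Gf u (t m)) - (af (t m*u^2))) * hrC + ((-(cf u (t m*u^2)) + ((alf u)*((z+z⁻¹)/2) - (Bf u (t m)))*(af (t m)) + ((cf u (t m*u^2)) - (alf u)*(cf u (t m)) + (1-(alf u))*(af (t m))*(Bf u (t m)))) + ((Gf u (t m)) - (af (t m*u^2)))*(((z+z⁻¹)/2) - (Bf u (t m)))) * hrB + ((((alf u)*((z+z⁻¹)/2) - (Bf u (t m)))*(cf u (t m)) + (((Bf u (t m)) - (alf u)*(Bf u (t m*(u^2)⁻¹)))*(cf u (t m)) - (Gf u (t m))*(Cf u (t m))) - (Cf u (t m))*(af (t m*(u^2)⁻¹))) - ((Gf u (t m)) - (af (t m*u^2)))*(Cf u (t m)) + ((-(cf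 u (t m*u^2)) + ((alf u)*((z+z⁻¹)/2) - (Bf u (t m)))*(af (t m)) + ((cf u (t m*u^2)) - (alf u)*(cf u (t m)) + (1-(alf u))*(af (t m))*(Bf u (t m)))) + ((Gf u (t m)) - (af (t m*u^2)))*(((z+z⁻¹)/2) - (Bf u (t m))))*(((z+z⁻¹)/2) - (Bf u (t m*(u^2)⁻¹)))) * hrA
  · rw [show m+1+1 = m+2 from by ring, show m+1-1 = m from by ring,
      show m+1-2 = m-1 from by ring, htp1, htp2, hsP, hsM]
    linear_combination (norm := (simp only [Bf, Cf, cf, af, alf, Gf]; field_simp; try ring))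
      ((alf u)*((z+z⁻¹)/2) - (Bf u (t m))) * h2g + (4*((u^2-(u^2)⁻¹)*(z-z⁻¹)/8)*((u^2-(u^2)⁻¹)*(z-z⁻¹)/8)) * h2a - (Cf u (t m)) * h1g + (-(Gf u (t m*u^2))) * hrD + ((-((cf u (t m*u^2*u^2)) - (alf u)*(cf u (t m*u^2)) + (1-(alf u))*(af (t m*u^2))*(Bf u (t m*u^2))) + ((alf u)*((z+z⁻¹)/2) - (Bf u (t m)))*(Gf u (t m))) + (-(Gf u (t m*u^2)))*(((z+z⁻¹)/2) - (Bf u (t m*u^2)))) * hrC + ((-(((Bf u (t m*u^2)) - (alf u)*(Bf u (t m)))*(cf u (t m*u^2)) - (Gf u (t m*u^2))*(Cf u (t m*u^2))) + ((alf u)*((z+z⁻¹)/2) - (Bf u (t m)))*((cf u (t m*u^2)) - (alf u)*(cf u (t m)) + (1-(alf u))*(af (t m))*(Bf u (t m))) + (4*((u^2-(u^2)⁻¹)*(z-z⁻¹)/8)*((u^2-(u^2)⁻¹)*(z-z⁻¹)/8))*(af (t m)) - (Cf u (t m))*(Gf u (t m*(u^2)⁻¹))) - (-(Gf u (t m*u^2)))*(Cf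 u (t m*u^2)) + ((-((cf u (t m*u^2*u^2)) - (alf u)*(cf u (t m*u^2)) + (1-(alf u))*(af (t m*u^2))*(Bf u (t m*u^2))) + ((alf u)*((z+z⁻¹)/2) - (Bf u (t m)))*(Gf u (t m))) + (-(Gf u (t m*u^2)))*(((z+z⁻¹)/2) - (Bf u (t m*u^2))))*(((z+z⁻¹)/2) - (Bf u (t m)))) * hrB + ((-((cf u (t m))*(Cf u (t m*u^2)) - (alf u)*(cf u (t m*u^2))*(Cf u (t m))) + ((alf u)*((z+z⁻¹)/2) - (Bf u (t m)))*(((Bf u (t m)) - (alf u)*(Bf u (t m*(u^2)⁻¹)))*(cf u (t m)) - (Gf u (t m))*(Cf u (t m))) + (4*((u^2-(u^2)⁻¹)*(z-z⁻¹)/8)*((u^2-(u^2)⁻¹)*(z-z⁻¹)/8))*(cf u (t m)) - (Cf u (t m))*((cf u (t m)) - (alf u)*(cf u (t m*(u^2)⁻¹)) + (1-(alf u))*(af (t m*(u^2)⁻¹))*(Bf u (t m*(u^2)⁻¹)))) - ((-((cf u (t m*u^2*u^2)) - (alf u)*(cf u (t m*u^2)) + (1-(alf u))*(af (t m*u^2))*(Bf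 u (t m*u^2))) + ((alf u)*((z+z⁻¹)/2) - (Bf u (t m)))*(Gf u (t m))) + (-(Gf u (t m*u^2)))*(((z+z⁻¹)/2) - (Bf u (t m*u^2))))*(Cf u (t m)) + ((-(((Bf u (t m*u^2)) - (alf u)*(Bf u (t m)))*(cf u (t m*u^2)) - (Gf u (t m*u^2))*(Cf u (t m*u^2))) + ((alf u)*((z+z⁻¹)/2) - (Bf u (t m)))*((cf u (t m*u^2)) - (alf u)*(cf u (t m)) + (1-(alf u))*(af (t m))*(Bf u (t m))) + (4*((u^2-(u^2)⁻¹)*(z-z⁻¹)/8)*((u^2-(u^2)⁻¹)*(z-z⁻¹)/8))*(af (t m)) - (Cf u (t m))*(Gf u (t m*(u^2)⁻¹))) - (-(Gf u (t m*u^2)))*(Cf u (t m*u^2)) + ((-((cf u (t m*u^2*u^2)) - (alf u)*(cf u (t m*u^2)) + (1-(alf u))*(af (t m*u^2))*(Bf u (t m*u^2))) + ((alf u)*((z+z⁻¹)/2) - (Bf u (t m)))*(Gf u (t m))) + (-(Gf u (t m*u^2)))*(((z+z⁻¹)/2) - (Bf u (t m*u^2))))*(((z+z⁻¹)/2) - (Bf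 u (t m))))*(((z+z⁻¹)/2) - (Bf u (t m*(u^2)⁻¹)))) * hrA

theorem PhiAux_all (u : ℝ) (hu : 0 < u) (hu1 : u < 1)
    (t : ℤ → ℝ) (htpos : ∀ k : ℤ, 0 < t k) (ht0 : t 0 = 1)
    (htrec : ∀ k : ℤ, t (k+1) = t k * u^2)
    (P : ℤ → ℝ → ℝ)
    (hPneg : ∀ n : ℤ, n < 0 → ∀ z : ℝ, P n z = 0)
    (hP0 : ∀ z : ℝ, P 0 z = 1)
    (hPrec : ∀ n : ℤ, 0 ≤ n → ∀ z : ℝ,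
      P (n + 1) z = ((z + z⁻¹) / 2 - Bf u (t n)) * P n z - Cf u (t n) * P (n - 1) z) :
    ∀ m : ℤ, 0 ≤ m → PhiAux u t P m := by
  have base0 := PhiAux_base0 u hu hu1 t htpos ht0 htrec P hPneg hP0 hPrec
  have base1 := PhiAux_base1 u hu hu1 t htpos ht0 htrec P hPneg hP0 hPrec
  have base2 := PhiAux_base2 u hu hu1 t htpos ht0 htrec P hPneg hP0 hPrec
  have hstep := PhiAux_step u hu hu1 t htpos ht0 htrec P hPneg hP0 hPrec
  have key : ∀ N : ℕ, PhiAux u t P (N:ℤ) ∧ PhiAux u t P ((N:ℤ)+1) := by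
    intro N
    induction N with
    | zero => exact ⟨by simpa using base0, by norm_num; exact base1⟩
    | succ k ih =>
      obtain ⟨i1, i2⟩ := ih
      constructor
      · push_cast
        exact i2
      · push_cast
        rcases k with _ | k'
        · norm_num
          exact base2
        · push_cast at i1 i2
          have h := hstep ((k':ℤ)+1+1) (by omega)
            (by rw [show (k':ℤ)+1+1-1 = (k':ℤ)+1 from by ring]; exact i1) i2
          rwa [show (k':ℤ)+1+1+1 = ((k'+1+1 : ℕ) : ℤ)+1 from by push_cast; ring] at h
  intro m hm
  lift m to ℕ using hm with N
  exact (key N).1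

set_option maxHeartbeats 1000000 in
/-- Equation (main-eq2) of Proposition 1: the structure relation
`U₂ · D_q P_n = c_{n,1} P_{n+1} + c_{n,2} P_n + c_{n,3} P_{n−1} + c_{n,4} P_{n−2}`
for `P_n = H_n(·; 1, −1, q^{1/4} | q^{1/2})`, written in the variable `z`
(`x = (z + z⁻¹)/2`). Quantities with negative index are `0`. -/
theorem Uq_Dq_structure_relation
    (q : ℝ) (hq0 : 0 < q) (hq1 : q < 1)
    (α : ℝ) (hα : α = (q ^ ((1 : ℝ)/2) + q ^ (-(1 : ℝ)/2)) / 2)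
    (αs : ℤ → ℝ)
    (hαs : ∀ n : ℤ, 0 ≤ n → αs n = (q ^ ((n : ℝ)/2) + q ^ (-(n : ℝ)/2)) / 2)
    (γ : ℤ → ℝ)
    (hγ : ∀ n : ℤ, 0 ≤ n → γ n = (q ^ ((n : ℝ)/2) - q ^ (-(n : ℝ)/2)) /
      (q ^ ((1 : ℝ)/2) - q ^ (-(1 : ℝ)/2)))
    (B : ℤ → ℝ)
    (hB : ∀ n : ℤ, 0 ≤ n → B n = (1/2) * ((1 + q ^ (-(1 : ℝ)/2)) * q ^ ((n : ℝ)/2)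
      + 1 - q ^ (-(1 : ℝ)/2)) * q ^ ((2 * (n : ℝ) + 1)/4))
    (hBneg : ∀ n : ℤ, n < 0 → B n = 0)
    (C : ℤ → ℝ)
    (hC : ∀ n : ℤ, 0 ≤ n → C n = (1/4) * (1 + q ^ (((n : ℝ) - 1)/2))
      * (1 - q ^ ((n : ℝ)/2)) * (1 - q ^ ((n : ℝ) - 1/2)))
    (hCneg : ∀ n : ℤ, n < 0 → C n = 0)
    (c : ℤ → ℝ)
    (hc : ∀ n : ℤ, 0 ≤ n → c n = C n * q ^ (-(2 * (n : ℝ) - 1)/4))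
    (hcneg : ∀ n : ℤ, n < 0 → c n = 0)
    (P : ℤ → ℝ → ℝ)
    (hPneg : ∀ n : ℤ, n < 0 → ∀ z : ℝ, P n z = 0)
    (hP0 : ∀ z : ℝ, P 0 z = 1)
    (hPrec : ∀ n : ℤ, 0 ≤ n → ∀ z : ℝ,
      P (n + 1) z = ((z + z⁻¹) / 2 - B n) * P n z - C n * P (n - 1) z)
    (U₂ : ℝ → ℝ)
    (hU : ∀ z : ℝ, U₂ z = (α ^ 2 - 1) * (((z + z⁻¹) / 2) ^ 2 - 1)) :
    ∀ n : ℤ, 0 ≤ n → ∀ z : ℝ, 0 < z → z ≠ 1 →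
      U₂ z * ((P n (q ^ ((1 : ℝ)/2) * z) - P n (q ^ (-(1 : ℝ)/2) * z)) /
          (((q ^ ((1 : ℝ)/2) - q ^ (-(1 : ℝ)/2)) / 2) * (z - z⁻¹)))
        = (α ^ 2 - 1) * γ n * P (n + 1) z
          + (c (n + 1) - α * c n + (1 - α) * αs n * B n) * P n z
          + ((B n - α * B (n - 1)) * c n + (1 - α ^ 2) * γ n * C n) * P (n - 1) z
          + (c (n - 1) * C n - α * c n * C (n - 1)) * P (n - 2) z := by
  set u := q ^ ((1:ℝ)/4) with hu_def
  have hu : 0 < u := Real.rpow_pos_of_pos hq0 _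
  have hu1 : u < 1 := Real.rpow_lt_one hq0.le hq1 (by norm_num)
  have hu0 : u ≠ 0 := ne_of_gt hu
  have hu2 : u^2 ≠ 0 := pow_ne_zero 2 hu0
  have hhalf : q ^ ((1:ℝ)/2) = u^2 := by
    rw [hu_def, show (1:ℝ)/2 = (1:ℝ)/4 + (1:ℝ)/4 from by norm_num, Real.rpow_add hq0, pow_two]
  have hhalfneg : q ^ (-(1:ℝ)/2) = (u^2)⁻¹ := by
    rw [show -(1:ℝ)/2 = -((1:ℝ)/2) from by ring, Real.rpow_neg hq0.le, hhalf]
  set t : ℤ → ℝ := fun k => q ^ ((k:ℝ)/2) with ht_def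
  have htpos : ∀ k : ℤ, 0 < t k := fun k => Real.rpow_pos_of_pos hq0 _
  have ht0 : t 0 = 1 := by simp [ht_def]
  have htrec : ∀ k : ℤ, t (k+1) = t k * u^2 := by
    intro k
    simp only [ht_def]
    rw [show ((k+1:ℤ):ℝ)/2 = (k:ℝ)/2 + (1:ℝ)/2 from by push_cast; ring, Real.rpow_add hq0,
      hhalf]
  have hmz : ∀ k : ℤ, q ^ (-(k:ℝ)/2) = (t k)⁻¹ := by
    intro k
    simp only [ht_def]
    rw [show -(k:ℝ)/2 = -((k:ℝ)/2) from by ring, Real.rpow_neg hq0.le]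
  have hBv : ∀ k : ℤ, 0 ≤ k → B k = Bf u (t k) := by
    intro k hk
    rw [hB k hk, hhalfneg,
      show (2*(k:ℝ)+1)/4 = (k:ℝ)/2 + (1:ℝ)/4 from by ring, Real.rpow_add hq0]
    simp only [Bf, ht_def, hu_def]
    try ring
  have hCv : ∀ k : ℤ, 0 ≤ k → C k = Cf u (t k) := by
    intro k hk
    rw [hC k hk,
      show ((k:ℝ)-1)/2 = (k:ℝ)/2 + (-(1:ℝ)/2) from by ring, Real.rpow_add hq0, hhalfneg,
      show (k:ℝ)-1/2 = (k:ℝ)/2 + ((k:ℝ)/2 + (-(1:ℝ)/2)) from by ring, Real.rpow_add hq0,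
      Real.rpow_add hq0, hhalfneg]
    simp only [Cf, ht_def]
    try ring
  have hcv : ∀ k : ℤ, 0 ≤ k → c k = cf u (t k) := by
    intro k hk
    rw [hc k hk, hCv k hk,
      show -(2*(k:ℝ)-1)/4 = (1:ℝ)/4 + (-(k:ℝ)/2) from by ring, Real.rpow_add hq0, hmz k]
    simp only [cf, ht_def, hu_def]
    try ring
  have hαv : ∀ k : ℤ, 0 ≤ k → αs k = af (t k) := by
    intro k hk
    rw [hαs k hk, hmz k]
    simp only [af, ht_def]
  have hαu : α = alf u := by rw [hα, hhalf, hhalfneg]; simp only [alf]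
  have hPrecf : ∀ k : ℤ, 0 ≤ k → ∀ w : ℝ,
      P (k+1) w = ((w+w⁻¹)/2 - Bf u (t k)) * P k w - Cf u (t k) * P (k-1) w := by
    intro k hk w
    rw [hPrec k hk w, hBv k hk, hCv k hk]
  have hall := PhiAux_all u hu hu1 t htpos ht0 htrec P hPneg hP0 hPrecf
  intro n hn z hz hz1
  obtain ⟨-, hdif⟩ := hall n hn z hz hz1
  have hz0 : z ≠ 0 := ne_of_gt hz
  have hzz : z - z⁻¹ ≠ 0 := by
    intro h
    rw [sub_eq_zero] at h
    have h2 : z * z = 1 := by nth_rewrite 2 [h]; exact mul_inv_cancel₀ hz0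
    have h4 : (z-1)*(z+1) = 0 := by nlinarith [h2]
    rcases mul_eq_zero.mp h4 with h5 | h5
    · exact hz1 (by linarith)
    · linarith
  have hd : u^2 - (u^2)⁻¹ ≠ 0 := by
    intro h
    have h3 : u^2 * (u^2)⁻¹ = 1 := mul_inv_cancel₀ hu2
    rw [sub_eq_zero] at h
    rw [← h] at h3
    have hu21 : u^2 < 1 := by nlinarith
    nlinarith [h3, hu21, pow_pos hu 2]
  have e_alpha : α^2 - 1 = ((u^2-(u^2)⁻¹)/2)^2 := by
    rw [hαu]; simp only [alf]; linear_combination mul_inv_cancel₀ hu2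
  have hγG : ∀ k : ℤ, 0 ≤ k → (α^2-1) * γ k = Gf u (t k) := by
    intro k hk
    have hsne : (q:ℝ) ^ ((k:ℝ)/2) ≠ 0 := ne_of_gt (Real.rpow_pos_of_pos hq0 _)
    rw [e_alpha, hγ k hk, hhalf, hhalfneg, hmz k]
    simp only [Gf, ht_def]
    obtain ⟨D, hDeq, hDne⟩ : ∃ D, u^2-(u^2)⁻¹ = D ∧ D ≠ 0 := ⟨_, rfl, hd⟩
    rw [hDeq]
    field_simp
    ring
  have g1 : (α^2-1)*γ n = Gf u (t n) := hγG n hn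
  have g2 : (1-α^2)*γ n = -Gf u (t n) := by linear_combination -g1
  rw [g1, g2]
  rw [hU z, hhalf, hhalfneg, e_alpha]
  have hcancel : ∀ Pd : ℝ,
      ((u^2-(u^2)⁻¹)/2)^2 * (((z+z⁻¹)/2)^2 - 1) * (Pd / ((u^2-(u^2)⁻¹)/2 * (z - z⁻¹)))
        = (u^2-(u^2)⁻¹) * (z-z⁻¹)/8 * Pd := by
    intro Pd
    have hzi : z * z⁻¹ = 1 := mul_inv_cancel₀ hz0
    have h1 : ((z+z⁻¹)/2)^2 - 1 = ((z-z⁻¹)/2)^2 := by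
      linear_combination hzi
    rw [h1]
    obtain ⟨D, hDeq, hDne⟩ : ∃ D, u^2-(u^2)⁻¹ = D ∧ D ≠ 0 := ⟨_, rfl, hd⟩
    obtain ⟨Y, hYeq, hYne⟩ : ∃ Y, z - z⁻¹ = Y ∧ Y ≠ 0 := ⟨_, rfl, hzz⟩
    rw [hDeq, hYeq]
    field_simp
    ring
  rw [hcancel, hdif]
  rw [hcv (n+1) (by omega), hcv n hn, hαv n hn, hBv n hn, hCv n hn, hαu]
  by_cases h0 : n = 0
  · subst h0
    rw [hPneg (0-1) (by norm_num) z, hPneg (0-2) (by norm_num) z]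
    simp only [Bf, Cf, cf, af, alf, Gf]
    ring
  · by_cases h1 : n = 1
    · subst h1
      rw [hPneg (1-2) (by norm_num) z,
        hcv (1-1) (by norm_num), hBv (1-1) (by norm_num), hCv (1-1) (by norm_num)]
      simp only [Bf, Cf, cf, af, alf, Gf]
      ring
    · rw [hcv (n-1) (by omega), hBv (n-1) (by omega), hCv (n-1) (by omega)]
      simp only [Bf, Cf, cf, af, alf, Gf]
      ring

end UqDqAux
end
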